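/- arXiv:1205.1177 — 2 statements merged into one kernel-verified Lean document; each statement's English description precedes it below -/
import Mathlib

section
/- Let 𝔥 be a reductive subalgebra of a real semisimple Lie algebra 𝔤 (preserved by a Cartan involution θ), with decomposition 𝔥 = Z_𝔨(𝔥) ⊕ Z_𝔭(𝔥) ⊕ [𝔥,𝔥], where Z_𝔨(𝔥) and Z_𝔭(𝔥) are the intersections of the center of 𝔥 with 𝔨 and 𝔭 respectively. If X ∈ 𝔥 is hyperbolic in 𝔤 and X = X_𝔨 + X_𝔭 + X' is its decomposition, then X_𝔨 = 0 and X' is a hyperbolic element of the semisimple Lie algebra [𝔥,𝔥]. -/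
/-!
For the Cartan inner product `⟪x, y⟫ = -B(x, θ y)` the operator `ad Xk` is skew and `ad Xp` is
symmetric, and both commute with the real-diagonalizable `ad X`. Hence `B(Xk, X)` is a sum over
the eigenvalues `c` of `ad X` of `c` times the trace of the skew operator `ad Xk` on the
`c`-eigenspace, i.e. zero. Together with `B(Xk, Xp) = 0` (opposite `θ`-eigenvalues) and
`B(Xk, [𝔥,𝔥]) = 0` (invariance of `B` and centrality of `Xk`) this gives `B(Xk, Xk) = 0`, so
`Xk = 0`. Then `ad X' = ad X - ad Xp`, and the symmetric `ad Xp` is diagonalizable on each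
eigenspace of `ad X`.
-/

open scoped RealInnerProductSpace
open Module.End

namespace LinearMap

section RCLike

variable {𝕜 E : Type*} [RCLike 𝕜] [NormedAddCommGroup E] [InnerProductSpace 𝕜 E]
  [FiniteDimensional 𝕜 E]

theorem trace_adjoint (T : E →ₗ[𝕜] E) : trace 𝕜 E (adjoint T) = star (trace 𝕜 E T) := by
  let b := (stdOrthonormalBasis 𝕜 E).toBasis
  rw [trace_eq_matrix_trace 𝕜 b, trace_eq_matrix_trace 𝕜 b, toMatrix_adjoint,
    Matrix.trace_conjTranspose]

end RCLike

variable {E : Type*} [NormedAddCommGroup E] [InnerProductSpace ℝ E] [FiniteDimensional ℝ E]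

theorem trace_eq_zero_of_inner_map_eq_neg {T : E →ₗ[ℝ] E}
    (hT : ∀ x y, ⟪T x, y⟫ = -⟪x, T y⟫) : trace ℝ E T = 0 := by
  have hadj : -T = adjoint T := (eq_adjoint_iff (-T) T).mpr fun x y => by
    rw [neg_apply, inner_neg_left, hT, neg_neg]
  have := trace_adjoint T
  rw [← hadj, map_neg, star_trivial] at this
  linarith

theorem trace_mul_eq_zero_of_commute {A S : E →ₗ[ℝ] E} (hA : ∀ x y, ⟪A x, y⟫ = -⟪x, A y⟫)
    (hAS : Commute A S) (hS : ⨆ c : ℝ, eigenspace S c = ⊤) : trace ℝ E (A * S) = 0 := by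
  have hindep := eigenspaces_iSupIndep S
  have hA_maps (c : ℝ) : Set.MapsTo A (eigenspace S c) (eigenspace S c) :=
    mapsTo_genEigenspace_of_comm hAS.symm c 1
  have hAS_maps (c : ℝ) : Set.MapsTo (A * S) (eigenspace S c) (eigenspace S c) :=
    mapsTo_genEigenspace_of_comm (hAS.symm.mul_right (Commute.refl S)) c 1
  rw [trace_eq_sum_trace_restrict' (DirectSum.isInternal_submodule_of_iSupIndep_of_iSup_eq_top
    hindep hS) (WellFoundedGT.finite_ne_bot_of_iSupIndep hindep) hAS_maps]
  refine Finset.sum_eq_zero fun c _ => ?_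
  have hrestrict : (A * S).restrict (hAS_maps c) = c • A.restrict (hA_maps c) := by
    ext x
    change A (S x) = c • A x
    rw [mem_eigenspace_iff.mp x.2, map_smul]
  have hskew : trace ℝ _ (A.restrict (hA_maps c)) = 0 :=
    trace_eq_zero_of_inner_map_eq_neg fun x y => hA x y
  rw [hrestrict, map_smul, hskew, smul_zero]

theorem iSup_eigenspace_add_eq_top_of_commute {S P : E →ₗ[ℝ] E} (hP : P.IsSymmetric)
    (hSP : Commute S P) (hS : ⨆ c : ℝ, eigenspace S c = ⊤) :
    ⨆ c : ℝ, eigenspace (S + P) c = ⊤ := by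
  refine eq_top_iff.mpr (hS ▸ iSup_le fun c => ?_)
  rw [← hP.iSup_eigenspace_inf_eigenspace_of_commute hSP]
  refine iSup_le fun d => le_iSup_of_le (c + d) fun x hx => ?_
  obtain ⟨hxS, hxP⟩ := Submodule.mem_inf.mp hx
  rw [mem_eigenspace_iff] at hxS hxP ⊢
  rw [add_apply, hxS, hxP, add_smul]

end LinearMap

namespace LieModule

variable {R L M : Type*} [CommRing R] [LieRing L] [LieAlgebra R L] [AddCommGroup M] [Module R M]
  [LieRingModule L M] [LieModule R L M]

theorem traceForm_eq_zero_of_forall_lie_eq_zero_of_mem_span_lie {H : LieSubalgebra R L} {z w : L}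
    (hz : ∀ y ∈ H, ⁅z, y⁆ = 0) (hw : w ∈ Submodule.span R {v | ∃ x ∈ H, ∃ y ∈ H, v = ⁅x, y⁆}) :
    traceForm R L M z w = 0 := by
  induction hw using Submodule.span_induction with
  | mem v hv =>
    obtain ⟨x, hx, y, -, rfl⟩ := hv
    rw [← traceForm_apply_lie_apply, hz x hx, map_zero, LinearMap.zero_apply]
  | zero => exact map_zero _
  | add u v _ _ hu hv => rw [map_add, hu, hv, add_zero]
  | smul r u _ hu => rw [map_smul, hu, smul_zero]

end LieModule

namespace LieAlgebra

variable {𝔤 : Type*} [LieRing 𝔤] [LieAlgebra ℝ 𝔤] {θ : 𝔤 →ₗ⁅ℝ⁆ 𝔤}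

local notation "B" => killingForm ℝ 𝔤

theorem commute_ad_of_lie_eq_zero {R L : Type*} [CommRing R] [LieRing L] [LieAlgebra R L]
    {x y : L} (h : ⁅x, y⁆ = 0) : Commute (ad R L x) (ad R L y) :=
  LinearMap.ext fun z => by
    rw [Module.End.mul_apply, Module.End.mul_apply, ad_apply, ad_apply, ad_apply, ad_apply,
      leibniz_lie, h, zero_lie, zero_add]

theorem killingForm_map_map (hθ : Function.Involutive θ) (x y : 𝔤) : B (θ x) (θ y) = B x y :=
  killingForm_of_equiv_apply { θ with invFun := θ, left_inv := hθ, right_inv := hθ } x y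

theorem killingForm_eq_zero_of_map_eq_self_of_map_eq_neg (hθ : Function.Involutive θ) {x y : 𝔤}
    (hx : θ x = x) (hy : θ y = -y) : B x y = 0 := by
  have := killingForm_map_map hθ x y
  rw [hx, hy, map_neg] at this
  linarith

/-- With respect to `⟪x, y⟫ = -B(x, θ y)`, the adjoint of `ad y` is `-ad (θ y)`. -/
theorem killingForm_lie_map (hθ : Function.Involutive θ) (x y z : 𝔤) :
    B ⁅y, x⁆ (θ z) = -B x (θ ⁅θ y, z⁆) := by
  rw [LieHom.map_lie, hθ, ← lie_skew, map_neg, LinearMap.neg_apply,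
    LieModule.traceForm_apply_lie_apply]

variable (θ) in
noncomputable abbrev cartanInnerProductCore (hθ : Function.Involutive θ)
    (hθB : ∀ x : 𝔤, x ≠ 0 → B x (θ x) < 0) : InnerProductSpace.Core ℝ 𝔤 where
  inner x y := -B x (θ y)
  conj_inner_symm x y := by
    rw [starRingEnd_apply, star_trivial, ← killingForm_map_map hθ y, hθ,
      LieModule.traceForm_comm]
  re_inner_nonneg x := by
    rcases eq_or_ne x 0 with rfl | hx
    · simp
    · exact neg_nonneg.mpr (hθB x hx).le
  add_left x y z := by simp only [map_add, LinearMap.add_apply, neg_add]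
  smul_left x y r := by simp [map_smul, LinearMap.smul_apply, smul_eq_mul]
  definite x hx := by
    by_contra hne
    exact (hθB x hne).ne (neg_eq_zero.mp hx)

theorem killingForm_eq_zero_of_map_eq_self_of_lie_eq_zero [FiniteDimensional ℝ 𝔤]
    (hθ : Function.Involutive θ) (hθB : ∀ x : 𝔤, x ≠ 0 → B x (θ x) < 0)
    {X Y : 𝔤} (hY : θ Y = Y) (hYX : ⁅Y, X⁆ = 0) (hX : ⨆ c : ℝ, eigenspace (ad ℝ 𝔤 X) c = ⊤) :
    B Y X = 0 := by
  have hcomm := commute_ad_of_lie_eq_zero (R := ℝ) hYX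
  let := (cartanInnerProductCore θ hθ hθB).toNormedAddCommGroup
  let := InnerProductSpace.ofCore (cartanInnerProductCore θ hθ hθB).toCore
  rw [killingForm_apply_apply]
  refine LinearMap.trace_mul_eq_zero_of_commute (fun x z => ?_) hcomm hX
  change -B ⁅Y, x⁆ (θ z) = -(-B x (θ ⁅Y, z⁆))
  rw [killingForm_lie_map hθ, hY]

theorem iSup_eigenspace_ad_add_eq_top [FiniteDimensional ℝ 𝔤] (hθ : Function.Involutive θ)
    (hθB : ∀ x : 𝔤, x ≠ 0 → B x (θ x) < 0) {X Y : 𝔤} (hY : θ Y = -Y) (hYX : ⁅Y, X⁆ = 0)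
    (hX : ⨆ c : ℝ, eigenspace (ad ℝ 𝔤 X) c = ⊤) :
    ⨆ c : ℝ, eigenspace (ad ℝ 𝔤 (X + Y)) c = ⊤ := by
  have hcomm := (commute_ad_of_lie_eq_zero (R := ℝ) hYX).symm
  let := (cartanInnerProductCore θ hθ hθB).toNormedAddCommGroup
  let := InnerProductSpace.ofCore (cartanInnerProductCore θ hθ hθB).toCore
  rw [map_add]
  refine LinearMap.iSup_eigenspace_add_eq_top_of_commute (fun x z => ?_) hcomm hX
  change -B ⁅Y, x⁆ (θ z) = -B x (θ ⁅Y, z⁆)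
  rw [killingForm_lie_map hθ, hY, neg_lie, map_neg, map_neg, neg_neg]

end LieAlgebra

theorem hyperbolic_decomposition_in_reductive_subalgebra_general
    (𝔤 : Type*) [LieRing 𝔤] [LieAlgebra ℝ 𝔤] [FiniteDimensional ℝ 𝔤]
    (θ : 𝔤 →ₗ⁅ℝ⁆ 𝔤) (hθinv : ∀ x, θ (θ x) = x)
    (hθcartan : ∀ x : 𝔤, x ≠ 0 → (killingForm ℝ 𝔤) x (θ x) < 0)
    (𝔥 : LieSubalgebra ℝ 𝔤)
    -- the derived subalgebra `[𝔥,𝔥]`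
    (𝔥' : Submodule ℝ 𝔤)
    (h𝔥' : 𝔥' = Submodule.span ℝ {z : 𝔤 | ∃ x ∈ 𝔥, ∃ y ∈ 𝔥, z = ⁅x, y⁆})
    (X Xk Xp X' : 𝔤) (hX : X ∈ 𝔥)
    -- `X = X_𝔨 + X_𝔭 + X'` with `X_𝔨 ∈ Z(𝔥) ∩ 𝔨`, `X_𝔭 ∈ Z(𝔥) ∩ 𝔭`, `X' ∈ [𝔥,𝔥]`
    (hsum : X = Xk + Xp + X')
    (hXkZ : ∀ y ∈ 𝔥, ⁅Xk, y⁆ = 0) (hXk𝔨 : θ Xk = Xk)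
    (hXpZ : ∀ y ∈ 𝔥, ⁅Xp, y⁆ = 0) (hXp𝔭 : θ Xp = -Xp)
    (hX' : X' ∈ 𝔥')
    -- `X` is hyperbolic in `𝔤`
    (hXhyp : ⨆ c : ℝ, Module.End.eigenspace (LieAlgebra.ad ℝ 𝔤 X) c = ⊤) :
    Xk = 0 ∧ 𝔥' ≤ ⨆ c : ℝ, Module.End.eigenspace (LieAlgebra.ad ℝ 𝔤 X') c := by
  have hXkX := LieAlgebra.killingForm_eq_zero_of_map_eq_self_of_lie_eq_zero hθinv hθcartan
    hXk𝔨 (hXkZ X hX) hXhyp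
  have hXkXp := LieAlgebra.killingForm_eq_zero_of_map_eq_self_of_map_eq_neg hθinv hXk𝔨 hXp𝔭
  have hXkX' := LieModule.traceForm_eq_zero_of_forall_lie_eq_zero_of_mem_span_lie (M := 𝔤) hXkZ
    (h𝔥' ▸ hX')
  have hXkXk : killingForm ℝ 𝔤 Xk Xk = 0 := by
    rw [hsum, map_add, map_add] at hXkX
    linarith
  have hXk : Xk = 0 := by
    by_contra hne
    simpa [hXk𝔨, hXkXk] using hθcartan Xk hne
  have hX'_eq : X' = X + -Xp := by
    rw [hsum, hXk]
    abel
  have hXpX : ⁅-Xp, X⁆ = 0 := by rw [neg_lie, hXpZ X hX, neg_zero]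
  refine ⟨hXk, ?_⟩
  rw [hX'_eq, LieAlgebra.iSup_eigenspace_ad_add_eq_top hθinv hθcartan (by rw [map_neg, hXp𝔭])
    hXpX hXhyp]
  exact le_top

/-- Let `𝔥` be a reductive subalgebra of a real semisimple Lie algebra `𝔤`
(preserved by a Cartan involution `θ`, with Cartan decomposition `𝔤 = 𝔨 + 𝔭`), with
decomposition `𝔥 = Z_𝔨(𝔥) ⊕ Z_𝔭(𝔥) ⊕ [𝔥,𝔥]`.  If `X ∈ 𝔥` is hyperbolic in `𝔤` and
`X = X_𝔨 + X_𝔭 + X'` is its decomposition, then `X_𝔨 = 0` and `X'` is a hyperbolic element of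
the semisimple Lie algebra `[𝔥,𝔥]` (i.e. `ad X'` acts diagonalizably with real eigenvalues on
`[𝔥,𝔥]`). -/
theorem hyperbolic_decomposition_in_reductive_subalgebra
    (𝔤 : Type*) [LieRing 𝔤] [LieAlgebra ℝ 𝔤] [FiniteDimensional ℝ 𝔤]
    [LieAlgebra.IsSemisimple ℝ 𝔤]
    (θ : 𝔤 →ₗ⁅ℝ⁆ 𝔤) (hθinv : ∀ x, θ (θ x) = x)
    (hθcartan : ∀ x : 𝔤, x ≠ 0 → (killingForm ℝ 𝔤) x (θ x) < 0)
    (𝔥 : LieSubalgebra ℝ 𝔤) (h𝔥θ : ∀ x ∈ 𝔥, θ x ∈ 𝔥)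
    -- the derived subalgebra `[𝔥,𝔥]`
    (𝔥' : Submodule ℝ 𝔤)
    (h𝔥' : 𝔥' = Submodule.span ℝ {z : 𝔤 | ∃ x ∈ 𝔥, ∃ y ∈ 𝔥, z = ⁅x, y⁆})
    (X Xk Xp X' : 𝔤) (hX : X ∈ 𝔥)
    -- `X = X_𝔨 + X_𝔭 + X'` with `X_𝔨 ∈ Z(𝔥) ∩ 𝔨`, `X_𝔭 ∈ Z(𝔥) ∩ 𝔭`, `X' ∈ [𝔥,𝔥]`
    (hsum : X = Xk + Xp + X')
    (hXk𝔥 : Xk ∈ 𝔥) (hXkZ : ∀ y ∈ 𝔥, ⁅Xk, y⁆ = 0) (hXk𝔨 : θ Xk = Xk)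
    (hXp𝔥 : Xp ∈ 𝔥) (hXpZ : ∀ y ∈ 𝔥, ⁅Xp, y⁆ = 0) (hXp𝔭 : θ Xp = -Xp)
    (hX' : X' ∈ 𝔥')
    -- `X` is hyperbolic in `𝔤`
    (hXhyp : ⨆ c : ℝ, Module.End.eigenspace (LieAlgebra.ad ℝ 𝔤 X) c = ⊤) :
    Xk = 0 ∧ 𝔥' ≤ ⨆ c : ℝ, Module.End.eigenspace (LieAlgebra.ad ℝ 𝔤 X') c :=
  hyperbolic_decomposition_in_reductive_subalgebra_general 𝔤 θ hθinv hθcartan 𝔥 𝔥' h𝔥' X Xk Xp X' hX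
    hsum hXkZ hXk𝔨 hXpZ hXp𝔭 hX' hXhyp
end

section
/- Let (𝔤,𝔥) be a semisimple symmetric pair with involution σ, θ a Cartan involution commuting with σ, 𝔞_𝔥 a maximal abelian subspace of 𝔭 ∩ 𝔥 extended to a maximal abelian subspace 𝔞 of 𝔭, and 𝔞^c a maximal abelian subspace of 𝔭^c containing 𝔞_𝔥, where 𝔤^c = 𝔥 + √-1·𝔮 is the c-dual. Then [𝔞, 𝔞^c] = {0} inside the complexification 𝔤_ℂ. -/
/-- Let `(𝔤,𝔥)` be a semisimple symmetric pair with involution `σ`, `θ` a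
Cartan involution commuting with `σ`, `𝔞_𝔥` a maximal abelian subspace of `𝔭 ∩ 𝔥` extended to
a maximal abelian subspace `𝔞` of `𝔭`, and `𝔞^c` a maximal abelian subspace of
`𝔭^c = (𝔭 ∩ 𝔥) + √-1·(𝔨 ∩ 𝔮)` containing `𝔞_𝔥`, where `𝔤^c = 𝔥 + √-1·𝔮` is the c-dual.
Then `[𝔞, 𝔞^c] = {0}` inside the complexification `𝔤_ℂ = L`.

Everything is realized inside the complexification `L`: `𝔤` is a real form of `L`, and `σ`,
`θ` are the `ℂ`-linear extensions to `L` of the commuting involutions of `𝔤`. -/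
theorem bracket_split_abelian_with_cDual_split_abelian_eq_zero
    (L : Type*) [LieRing L] [LieAlgebra ℂ L] [FiniteDimensional ℂ L]
    [LieAlgebra.IsSemisimple ℂ L]
    -- `𝔤` is a real form of `L`
    (𝔤 : Submodule ℝ L)
    (h𝔤bracket : ∀ x ∈ 𝔤, ∀ y ∈ 𝔤, ⁅x, y⁆ ∈ 𝔤)
    (h𝔤span : ∀ z : L, ∃ x ∈ 𝔤, ∃ y ∈ 𝔤, z = x + Complex.I • y)
    (h𝔤ind : ∀ x ∈ 𝔤, ∀ y ∈ 𝔤, x + Complex.I • y = 0 → x = 0 ∧ y = 0)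
    -- `σ` is the (ℂ-linear extension of the) involution defining the symmetric pair
    (σ : L →ₗ[ℂ] L) (hσinv : ∀ z, σ (σ z) = z)
    (hσbracket : ∀ z w : L, σ ⁅z, w⁆ = ⁅σ z, σ w⁆)
    (hσ𝔤 : ∀ x ∈ 𝔤, σ x ∈ 𝔤)
    -- `θ` is the (ℂ-linear extension of the) Cartan involution of `𝔤`
    (θ : L →ₗ[ℂ] L) (hθinv : ∀ z, θ (θ z) = z)
    (hθbracket : ∀ z w : L, θ ⁅z, w⁆ = ⁅θ z, θ w⁆)
    (hθ𝔤 : ∀ x ∈ 𝔤, θ x ∈ 𝔤)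
    (hθcartan : ∀ x ∈ 𝔤, x ≠ 0 →
      ((killingForm ℂ L) x (θ x)).re < 0 ∧ ((killingForm ℂ L) x (θ x)).im = 0)
    (hcomm : ∀ z, σ (θ z) = θ (σ z))
    -- `𝔞_𝔥` is a maximal abelian subspace of `𝔭 ∩ 𝔥`
    (𝔞𝔥 : Submodule ℝ L)
    (h𝔞𝔥sub : ∀ x ∈ 𝔞𝔥, x ∈ 𝔤 ∧ θ x = -x ∧ σ x = x)
    (h𝔞𝔥ab : ∀ x ∈ 𝔞𝔥, ∀ y ∈ 𝔞𝔥, ⁅x, y⁆ = 0)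
    (h𝔞𝔥max : ∀ 𝔟 : Submodule ℝ L, 𝔞𝔥 ≤ 𝔟 → (∀ x ∈ 𝔟, x ∈ 𝔤 ∧ θ x = -x ∧ σ x = x) →
      (∀ x ∈ 𝔟, ∀ y ∈ 𝔟, ⁅x, y⁆ = 0) → 𝔟 = 𝔞𝔥)
    -- `𝔞` is a maximal abelian subspace of `𝔭` containing `𝔞_𝔥`
    (𝔞 : Submodule ℝ L) (h𝔞𝔥𝔞 : 𝔞𝔥 ≤ 𝔞)
    (h𝔞sub : ∀ x ∈ 𝔞, x ∈ 𝔤 ∧ θ x = -x)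
    (h𝔞ab : ∀ x ∈ 𝔞, ∀ y ∈ 𝔞, ⁅x, y⁆ = 0)
    (h𝔞max : ∀ 𝔟 : Submodule ℝ L, 𝔞 ≤ 𝔟 → (∀ x ∈ 𝔟, x ∈ 𝔤 ∧ θ x = -x) →
      (∀ x ∈ 𝔟, ∀ y ∈ 𝔟, ⁅x, y⁆ = 0) → 𝔟 = 𝔞)
    -- `𝔞^c` is a maximal abelian subspace of `𝔭^c = (𝔭 ∩ 𝔥) + √-1·(𝔨 ∩ 𝔮)` containing `𝔞_𝔥`
    (𝔞c : Submodule ℝ L) (h𝔞𝔥𝔞c : 𝔞𝔥 ≤ 𝔞c)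
    (h𝔞csub : ∀ z ∈ 𝔞c, ∃ x, ∃ y, (x ∈ 𝔤 ∧ θ x = -x ∧ σ x = x) ∧
      (y ∈ 𝔤 ∧ θ y = y ∧ σ y = -y) ∧ z = x + Complex.I • y)
    (h𝔞cab : ∀ x ∈ 𝔞c, ∀ y ∈ 𝔞c, ⁅x, y⁆ = 0)
    (h𝔞cmax : ∀ 𝔟 : Submodule ℝ L, 𝔞c ≤ 𝔟 →
      (∀ z ∈ 𝔟, ∃ x, ∃ y, (x ∈ 𝔤 ∧ θ x = -x ∧ σ x = x) ∧
        (y ∈ 𝔤 ∧ θ y = y ∧ σ y = -y) ∧ z = x + Complex.I • y) →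
      (∀ x ∈ 𝔟, ∀ y ∈ 𝔟, ⁅x, y⁆ = 0) → 𝔟 = 𝔞c) :
    ∀ x ∈ 𝔞, ∀ y ∈ 𝔞c, ⁅x, y⁆ = 0 := by
  -- real scalars act as complex scalars
  have rsmul : ∀ (c : ℝ) (w : L), c • w = (c : ℂ) • w := fun c w =>
    (algebraMap_smul ℂ c w).symm
  -- Key: an element of `𝔭 ∩ 𝔥` centralizing `𝔞𝔥` lies in `𝔞𝔥`.
  have key : ∀ v : L, v ∈ 𝔤 → θ v = -v → σ v = v → (∀ h ∈ 𝔞𝔥, ⁅h, v⁆ = 0) → v ∈ 𝔞𝔥 := by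
    intro v hv𝔤 hθv hσv hcent
    set 𝔟 : Submodule ℝ L := 𝔞𝔥 ⊔ Submodule.span ℝ {v} with h𝔟
    have hmem : ∀ w ∈ 𝔟, ∃ h ∈ 𝔞𝔥, ∃ c : ℝ, w = h + c • v := by
      intro w hw
      rcases Submodule.mem_sup.mp hw with ⟨h, hh, s, hs, rfl⟩
      rcases Submodule.mem_span_singleton.mp hs with ⟨c, rfl⟩
      exact ⟨h, hh, c, rfl⟩
    have hsub : ∀ w ∈ 𝔟, w ∈ 𝔤 ∧ θ w = -w ∧ σ w = w := by
      intro w hw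
      rcases hmem w hw with ⟨h, hh, c, rfl⟩
      obtain ⟨hh𝔤, hhθ, hhσ⟩ := h𝔞𝔥sub h hh
      refine ⟨𝔤.add_mem hh𝔤 (𝔤.smul_mem c hv𝔤), ?_, ?_⟩
      · rw [map_add, rsmul, map_smul, hhθ, hθv, smul_neg, ← rsmul, neg_add]
      · rw [map_add, rsmul, map_smul, hhσ, hσv, ← rsmul]
    have hab : ∀ w ∈ 𝔟, ∀ w' ∈ 𝔟, ⁅w, w'⁆ = 0 := by
      intro w hw w' hw'
      rcases hmem w hw with ⟨h, hh, c, rfl⟩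
      rcases hmem w' hw' with ⟨h', hh', c', rfl⟩
      have h1 : ⁅h, v⁆ = 0 := hcent h hh
      have h2 : ⁅v, h'⁆ = 0 := by
        rw [← lie_skew, hcent h' hh', neg_zero]
      simp only [rsmul, add_lie, lie_add, lie_smul, smul_lie, h1, h2,
        h𝔞𝔥ab h hh h' hh', lie_self, smul_zero, zero_add, add_zero]
    have : 𝔟 = 𝔞𝔥 := h𝔞𝔥max 𝔟 le_sup_left hsub hab
    rw [← this]
    exact Submodule.mem_sup_right (Submodule.mem_span_singleton_self v)
  intro a ha z hz
  obtain ⟨x, y, ⟨hx𝔤, hxθ, hxσ⟩, ⟨hy𝔤, hyθ, hyσ⟩, rfl⟩ := h𝔞csub z hz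
  -- Step 1: `𝔞𝔥` centralizes both `x` and `y`.
  have step1 : ∀ h ∈ 𝔞𝔥, ⁅h, x⁆ = 0 ∧ ⁅h, y⁆ = 0 := by
    intro h hh
    have h𝔤 := (h𝔞𝔥sub h hh).1
    have hzero : ⁅h, x⁆ + Complex.I • ⁅h, y⁆ = 0 := by
      rw [← lie_smul, ← lie_add]
      exact h𝔞cab h (h𝔞𝔥𝔞c hh) _ hz
    exact h𝔤ind _ (h𝔤bracket h h𝔤 x hx𝔤) _ (h𝔤bracket h h𝔤 y hy𝔤) hzero
  -- Step 2: `x ∈ 𝔞𝔥`.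
  have hx𝔞𝔥 : x ∈ 𝔞𝔥 := key x hx𝔤 hxθ hxσ (fun h hh => (step1 h hh).1)
  -- Step 3: decompose `a = a₊ + a₋`, with `a₊ ∈ 𝔞𝔥`.
  obtain ⟨ha𝔤, haθ⟩ := h𝔞sub a ha
  set ap : L := (1 / 2 : ℝ) • (a + σ a) with hap
  set am : L := (1 / 2 : ℝ) • (a - σ a) with ham
  have hsum : ap + am = a := by rw [hap, ham]; module
  have hσa𝔤 : σ a ∈ 𝔤 := hσ𝔤 a ha𝔤
  have hap𝔤 : ap ∈ 𝔤 := 𝔤.smul_mem _ (𝔤.add_mem ha𝔤 hσa𝔤)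
  have ham𝔤 : am ∈ 𝔤 := 𝔤.smul_mem _ (𝔤.sub_mem ha𝔤 hσa𝔤)
  have hθσa : θ (σ a) = -σ a := by rw [← hcomm, haθ, map_neg]
  have hapθ : θ ap = -ap := by
    rw [hap, rsmul, map_smul, map_add, haθ, hθσa, ← rsmul]; module
  have hamθ : θ am = -am := by
    rw [ham, rsmul, map_smul, map_sub, haθ, hθσa, ← rsmul]; module
  have hapσ : σ ap = ap := by
    rw [hap, rsmul, map_smul, map_add, hσinv, ← rsmul]; module
  have hamσ : σ am = -am := by
    rw [ham, rsmul, map_smul, map_sub, hσinv, ← rsmul]; module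
  have hcenta : ∀ h ∈ 𝔞𝔥, ⁅h, a⁆ = 0 := fun h hh => h𝔞ab h (h𝔞𝔥𝔞 hh) a ha
  have hcentσa : ∀ h ∈ 𝔞𝔥, ⁅h, σ a⁆ = 0 := by
    intro h hh
    have hhσ := (h𝔞𝔥sub h hh).2.2
    have := hσbracket h a
    rw [hcenta h hh, map_zero, hhσ] at this
    exact this.symm
  have hap𝔞𝔥 : ap ∈ 𝔞𝔥 := by
    refine key ap hap𝔤 hapθ hapσ ?_
    intro h hh
    rw [hap, rsmul, lie_smul, lie_add, hcenta h hh, hcentσa h hh]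
    simp
  have ham𝔞 : am ∈ 𝔞 := by
    have : am = a - ap := by rw [← hsum]; abel
    rw [this]
    exact 𝔞.sub_mem ha (h𝔞𝔥𝔞 hap𝔞𝔥)
  -- Step 4: `u = ⁅am, y⁆` lies in `𝔞𝔥`.
  set u : L := ⁅am, y⁆ with hu
  have hu𝔤 : u ∈ 𝔤 := h𝔤bracket am ham𝔤 y hy𝔤
  have huθ : θ u = -u := by
    rw [hu, hθbracket, hamθ, hyθ, neg_lie]
  have huσ : σ u = u := by
    rw [hu, hσbracket, hamσ, hyσ, neg_lie, lie_neg, neg_neg]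
  have hucent : ∀ h ∈ 𝔞𝔥, ⁅h, u⁆ = 0 := by
    intro h hh
    have h1 : ⁅h, am⁆ = 0 := h𝔞ab h (h𝔞𝔥𝔞 hh) am ham𝔞
    rw [hu, leibniz_lie, h1, (step1 h hh).2, zero_lie, lie_zero, add_zero]
  have hu𝔞𝔥 : u ∈ 𝔞𝔥 := key u hu𝔤 huθ huσ hucent
  -- Step 5: `u = 0` via the Killing form.
  have hBuu : killingForm ℂ L u u = 0 := by
    have h1 : ⁅am, u⁆ = 0 := h𝔞ab am ham𝔞 u (h𝔞𝔥𝔞 hu𝔞𝔥)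
    calc killingForm ℂ L u u = killingForm ℂ L ⁅am, y⁆ u := rfl
      _ = - killingForm ℂ L y ⁅am, u⁆ := LieModule.traceForm_apply_lie_apply' ℂ L L am y u
      _ = 0 := by rw [h1]; simp
  have hu0 : u = 0 := by
    by_contra hne
    have := (hθcartan u hu𝔤 hne).1
    rw [huθ] at this
    simp [hBuu] at this
  -- Conclusion.
  have hay : ⁅a, y⁆ = 0 := by
    have h1 : ⁅ap, y⁆ = 0 := (step1 ap hap𝔞𝔥).2
    calc ⁅a, y⁆ = ⁅ap + am, y⁆ := by rw [hsum]
      _ = ⁅ap, y⁆ + ⁅am, y⁆ := add_lie ap am y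
      _ = 0 := by rw [h1, ← hu, hu0, add_zero]
  have hax : ⁅a, x⁆ = 0 := h𝔞ab a ha x (h𝔞𝔥𝔞 hx𝔞𝔥)
  rw [lie_add, lie_smul, hax, hay]
  simp
end
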